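/- For every σ ∈ Λ²₊V and every τ ∈ Λ²₋V, the endomorphisms K_σ and K_τ of V commute: K_σ ∘ K_τ = K_τ ∘ K_σ. -/

import Mathlib

/-!
In a positively oriented orthonormal basis `e`, `⋆` exchanges `e₀∧e₁ ↔ e₂∧e₃`, `e₀∧e₂ ↔ e₃∧e₁`
and `e₀∧e₃ ↔ e₁∧e₂`. These six wedges span `Λ²V` and are orthogonal of equal length, so `⋆` is
symmetric, and for a `⋆`-eigenvector `a` with eigenvalue `ε` the skew matrix `(⟪a, eᵢ∧eⱼ⟫)`,
which is (up to transpose and a factor `2`) the matrix of `K_a`, has a rigid shape determined by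
`ε` and its first row. For `ε = 1` and `ε = -1` these are the matrices of left and of right
multiplication by imaginary quaternions, and left and right multiplications commute.
-/

open scoped RealInnerProductSpace Matrix

def starEigenMatrix (ε p q r : ℝ) : Matrix (Fin 4) (Fin 4) ℝ :=
  !![0, p, q, r; -p, 0, ε * r, -(ε * q); -q, -(ε * r), 0, ε * p; -r, ε * q, -(ε * p), 0]

theorem commute_starEigenMatrix (p q r p' q' r' : ℝ) :
    Commute (starEigenMatrix 1 p q r) (starEigenMatrix (-1) p' q' r') := by
  ext i j
  fin_cases i <;> fin_cases j <;>
    simp [starEigenMatrix, Matrix.mul_apply, Fin.sum_univ_four] <;> ring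

section Wedge

variable {ι V L : Type*} [NormedAddCommGroup V] [InnerProductSpace ℝ V]
  [NormedAddCommGroup L] [InnerProductSpace ℝ L]

theorem wedge_swap {wedge : V →ₗ[ℝ] V →ₗ[ℝ] L} (wedge_self : ∀ v, wedge v v = 0) (u v : V) :
    wedge v u = -wedge u v := by
  have h := wedge_self (u + v)
  simp only [map_add, LinearMap.add_apply, wedge_self, zero_add, add_zero] at h
  exact eq_neg_of_add_eq_zero_left h

theorem inner_wedge_orthonormal {wedge : V →ₗ[ℝ] V →ₗ[ℝ] L}
    (inner_wedge : ∀ v₁ v₂ v₃ v₄ : V, ⟪wedge v₁ v₂, wedge v₃ v₄⟫ =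
      (1 / 2) * (⟪v₁, v₃⟫ * ⟪v₂, v₄⟫ - ⟪v₁, v₄⟫ * ⟪v₂, v₃⟫))
    [DecidableEq ι] {b : ι → V} (hb : Orthonormal ℝ b) (i j k l : ι) :
    ⟪wedge (b i) (b j), wedge (b k) (b l)⟫ =
      (1 / 2) * ((if i = k then 1 else 0) * (if j = l then 1 else 0) -
        (if i = l then 1 else 0) * (if j = k then 1 else 0)) := by
  simp only [inner_wedge, orthonormal_iff_ite.mp hb]

theorem span_image2_wedge_basis {wedge : V →ₗ[ℝ] V →ₗ[ℝ] L}
    (wedge_span : Submodule.span ℝ {x : L | ∃ u v : V, wedge u v = x} = ⊤)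
    (b : Module.Basis ι ℝ V) :
    Submodule.span ℝ (Set.image2 (fun u v => wedge u v) (Set.range b) (Set.range b)) = ⊤ := by
  rw [← Submodule.map₂_span_span, b.span_eq, eq_top_iff, ← wedge_span, Submodule.span_le]
  rintro _ ⟨u, v, rfl⟩
  exact Submodule.apply_mem_map₂ _ Submodule.mem_top Submodule.mem_top

theorem LinearMap.isSymmetric_of_span_eq_top {f : L →ₗ[ℝ] L} {s : Set L}
    (hs : Submodule.span ℝ s = ⊤) (h : ∀ x ∈ s, ∀ y ∈ s, ⟪f x, y⟫ = ⟪x, f y⟫) :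
    f.IsSymmetric := by
  have h' : ∀ x, ∀ y ∈ s, ⟪f x, y⟫ = ⟪x, f y⟫ := by
    intro x y hy
    have := LinearMap.ext_on (f := (innerₛₗ ℝ y).comp f) (g := innerₛₗ ℝ (f y)) hs
      fun x hx => (real_inner_comm (f x) y).trans ((h x hx y hy).trans (real_inner_comm (f y) x))
    rw [real_inner_comm y, real_inner_comm (f y)]
    exact LinearMap.congr_fun this x
  intro x y
  exact LinearMap.congr_fun (LinearMap.ext_on (f := innerₛₗ ℝ (f x)) (g := (innerₛₗ ℝ x).comp f)
    hs fun y hy => h' x y hy) y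

def wedgeMatrix (wedge : V →ₗ[ℝ] V →ₗ[ℝ] L) (b : ι → V) (a : L) : Matrix ι ι ℝ :=
  Matrix.of fun i j => ⟪a, wedge (b i) (b j)⟫

theorem toMatrix_eq_smul_transpose_wedgeMatrix [Fintype ι] [DecidableEq ι]
    (wedge : V →ₗ[ℝ] V →ₗ[ℝ] L) (b : OrthonormalBasis ι ℝ V) {a : L} {K : V →ₗ[ℝ] V}
    (hK : ∀ X Y : V, ⟪K X, Y⟫ = 2 * ⟪a, wedge X Y⟫) :
    LinearMap.toMatrix b.toBasis b.toBasis K = (2 : ℝ) • (wedgeMatrix wedge b a)ᵀ := by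
  ext i j
  simp only [LinearMap.toMatrix_apply, OrthonormalBasis.coe_toBasis_repr_apply,
    b.repr_apply_apply, OrthonormalBasis.coe_toBasis, Matrix.smul_apply, Matrix.transpose_apply,
    wedgeMatrix, Matrix.of_apply, smul_eq_mul]
  rw [real_inner_comm, hK]

end Wedge

section Hodge

variable {V L : Type*} [NormedAddCommGroup V] [InnerProductSpace ℝ V]
  [NormedAddCommGroup L] [InnerProductSpace ℝ L]

theorem hodge_isSymmetric {wedge : V →ₗ[ℝ] V →ₗ[ℝ] L} (wedge_self : ∀ v, wedge v v = 0)
    (wedge_span : Submodule.span ℝ {x : L | ∃ u v : V, wedge u v = x} = ⊤)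
    (inner_wedge : ∀ v₁ v₂ v₃ v₄ : V, ⟪wedge v₁ v₂, wedge v₃ v₄⟫ =
      (1 / 2) * (⟪v₁, v₃⟫ * ⟪v₂, v₄⟫ - ⟪v₁, v₄⟫ * ⟪v₂, v₃⟫))
    {hodge : L →ₗ[ℝ] L} (hodge_hodge : ∀ x, hodge (hodge x) = x)
    (b : OrthonormalBasis (Fin 4) ℝ V)
    (h01 : hodge (wedge (b 0) (b 1)) = wedge (b 2) (b 3))
    (h02 : hodge (wedge (b 0) (b 2)) = wedge (b 3) (b 1))
    (h03 : hodge (wedge (b 0) (b 3)) = wedge (b 1) (b 2)) :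
    hodge.IsSymmetric := by
  have h23 : hodge (wedge (b 2) (b 3)) = wedge (b 0) (b 1) := by rw [← h01, hodge_hodge]
  have h31 : hodge (wedge (b 3) (b 1)) = wedge (b 0) (b 2) := by rw [← h02, hodge_hodge]
  have h12 : hodge (wedge (b 1) (b 2)) = wedge (b 0) (b 3) := by rw [← h03, hodge_hodge]
  set S := Submodule.span ℝ {wedge (b 0) (b 1), wedge (b 0) (b 2), wedge (b 0) (b 3),
    wedge (b 2) (b 3), wedge (b 3) (b 1), wedge (b 1) (b 2)}
  have hspan : S = ⊤ := by
    rw [eq_top_iff, ← span_image2_wedge_basis wedge_span b.toBasis, Submodule.span_le]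
    rintro _ ⟨_, ⟨i, rfl⟩, _, ⟨j, rfl⟩, rfl⟩
    simp only [OrthonormalBasis.coe_toBasis]
    fin_cases i <;> fin_cases j <;>
      first
      | (rw [SetLike.mem_coe, wedge_self]; exact S.zero_mem)
      | (apply Submodule.subset_span; simp; done)
      | (rw [SetLike.mem_coe, wedge_swap wedge_self]
         exact S.neg_mem (Submodule.subset_span (by simp)))
  refine LinearMap.isSymmetric_of_span_eq_top hspan ?_
  simp only [Set.mem_insert_iff, Set.mem_singleton_iff, forall_eq_or_imp, forall_eq]
  simp only [h01, h02, h03, h23, h31, h12, inner_wedge_orthonormal inner_wedge b.orthonormal]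
  norm_num [Fin.ext_iff]

theorem wedgeMatrix_eq_starEigenMatrix {wedge : V →ₗ[ℝ] V →ₗ[ℝ] L}
    (wedge_self : ∀ v, wedge v v = 0) {hodge : L →ₗ[ℝ] L} (hodge_symm : hodge.IsSymmetric)
    (b : Fin 4 → V)
    (h01 : hodge (wedge (b 0) (b 1)) = wedge (b 2) (b 3))
    (h02 : hodge (wedge (b 0) (b 2)) = wedge (b 3) (b 1))
    (h03 : hodge (wedge (b 0) (b 3)) = wedge (b 1) (b 2))
    {ε : ℝ} {x : L} (hx : hodge x = ε • x) :
    wedgeMatrix wedge b x = starEigenMatrix ε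
      ⟪x, wedge (b 0) (b 1)⟫ ⟪x, wedge (b 0) (b 2)⟫ ⟪x, wedge (b 0) (b 3)⟫ := by
  have inner_hodge : ∀ y, ⟪x, hodge y⟫ = ε * ⟪x, y⟫ := fun y => by
    rw [← hodge_symm, hx, real_inner_smul_left]
  have x23 : ⟪x, wedge (b 2) (b 3)⟫ = ε * ⟪x, wedge (b 0) (b 1)⟫ := by rw [← h01, inner_hodge]
  have x31 : ⟪x, wedge (b 3) (b 1)⟫ = ε * ⟪x, wedge (b 0) (b 2)⟫ := by rw [← h02, inner_hodge]
  have x12 : ⟪x, wedge (b 1) (b 2)⟫ = ε * ⟪x, wedge (b 0) (b 3)⟫ := by rw [← h03, inner_hodge]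
  ext i j
  fin_cases i <;> fin_cases j <;>
    simp [wedgeMatrix, starEigenMatrix, wedge_self, x23, x31, x12,
      wedge_swap wedge_self (b 0) (b 1), wedge_swap wedge_self (b 0) (b 2),
      wedge_swap wedge_self (b 0) (b 3), wedge_swap wedge_self (b 2) (b 3),
      wedge_swap wedge_self (b 3) (b 1), wedge_swap wedge_self (b 1) (b 2)]

end Hodge

/-- Let `V` be a 4-dimensional oriented real inner product space with Hodge
star `⋆` on `Λ²V`, and `Λ²₊V`, `Λ²₋V` its `(±1)`-eigenspaces.  For every `σ ∈ Λ²₊V` and every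
`τ ∈ Λ²₋V`, the endomorphisms `K_σ` and `K_τ` of `V` (defined by `⟨K_aX,Y⟩ = 2⟨a, X∧Y⟩`)
commute: `K_σ ∘ K_τ = K_τ ∘ K_σ`. -/
theorem stmt_6 {V L : Type*}
    [NormedAddCommGroup V] [InnerProductSpace ℝ V]
    [NormedAddCommGroup L] [InnerProductSpace ℝ L]
    (h4 : Module.finrank ℝ V = 4)
    (o : Orientation ℝ V (Fin 4))
    (wedge : V →ₗ[ℝ] V →ₗ[ℝ] L)
    (wedge_self : ∀ v : V, wedge v v = 0)
    (wedge_span : Submodule.span ℝ {x : L | ∃ u v : V, wedge u v = x} = ⊤)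
    (inner_wedge : ∀ v₁ v₂ v₃ v₄ : V,
      ⟪wedge v₁ v₂, wedge v₃ v₄⟫ =
        (1 / 2) * (⟪v₁, v₃⟫ * ⟪v₂, v₄⟫ - ⟪v₁, v₄⟫ * ⟪v₂, v₃⟫))
    (hodge : L →ₗ[ℝ] L)
    (hodge_hodge : ∀ x : L, hodge (hodge x) = x)
    (hodge_wedge : ∀ b : OrthonormalBasis (Fin 4) ℝ V, b.toBasis.orientation = o →
      hodge (wedge (b 0) (b 1)) = wedge (b 2) (b 3) ∧
      hodge (wedge (b 0) (b 2)) = wedge (b 3) (b 1) ∧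
      hodge (wedge (b 0) (b 3)) = wedge (b 1) (b 2))
    (σ τ : L) (hσ : hodge σ = σ) (hτ : hodge τ = -τ)
    (Kσ Kτ : V →ₗ[ℝ] V)
    (hKσ : ∀ X Y : V, ⟪Kσ X, Y⟫ = 2 * ⟪σ, wedge X Y⟫)
    (hKτ : ∀ X Y : V, ⟪Kτ X, Y⟫ = 2 * ⟪τ, wedge X Y⟫) :
    Kσ ∘ₗ Kτ = Kτ ∘ₗ Kσ := by
  let b := o.finOrthonormalBasis (by norm_num) h4
  obtain ⟨h01, h02, h03⟩ := hodge_wedge b (o.finOrthonormalBasis_orientation _ h4)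
  have hodge_symm :=
    hodge_isSymmetric wedge_self wedge_span inner_wedge hodge_hodge b h01 h02 h03
  have hMσ := wedgeMatrix_eq_starEigenMatrix wedge_self hodge_symm b h01 h02 h03
    (ε := 1) (by rw [hσ, one_smul])
  have hMτ := wedgeMatrix_eq_starEigenMatrix wedge_self hodge_symm b h01 h02 h03
    (ε := -1) (by rw [hτ, neg_one_smul])
  apply (LinearMap.toMatrix b.toBasis b.toBasis).injective
  rw [LinearMap.toMatrix_comp b.toBasis b.toBasis b.toBasis,
    LinearMap.toMatrix_comp b.toBasis b.toBasis b.toBasis,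
    toMatrix_eq_smul_transpose_wedgeMatrix wedge b hKσ,
    toMatrix_eq_smul_transpose_wedgeMatrix wedge b hKτ, hMσ, hMτ, smul_mul_smul_comm,
    smul_mul_smul_comm, ← Matrix.transpose_mul, ← Matrix.transpose_mul,
    (commute_starEigenMatrix ..).eq]
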